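/- arXiv:1810.11005 — 2 statements merged into one kernel-verified Lean document; each statement's English description precedes it below -/
import Mathlib

section
/- Suppose that for each n ∈ ℕ the sequence (h_{n,k})_{k∈ℕ} is a regular sequence of functions on [0,1]. Define g_k := ∑_{n=0}^k 2^{-2n-1}·h_{n,k-n} for k ∈ ℕ. Then (g_k)_{k∈ℕ} is a regular sequence, and Ω((g_k)) ⊆ ⋂_{n∈ℕ} Ω((h_{n,k})_{k∈ℕ}); that is, every x ∈ [0,1] at which the partial sums of ∑_k g_k(x) are bounded has, for every n, bounded partial sums of ∑_k h_{n,k}(x). -/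
open MeasureTheory Filter Set

noncomputable section

/-- A sequence of functions on `[0,1]` is *regular* if each member is continuous and
nonnegative on `[0,1]` and has integral over `[0,1]` strictly less than `2⁻ⁿ`. -/
def RegularSeq (h : ℕ → ℝ → ℝ) : Prop :=
  ∀ n : ℕ, ContinuousOn (h n) (Set.Icc 0 1) ∧
    (∀ x ∈ Set.Icc (0:ℝ) 1, 0 ≤ h n x) ∧
    (∫ x in (0:ℝ)..1, h n x) < (1/2 : ℝ) ^ n

/-- The set `Ω(𝔥)` of points of `[0,1]` at which the partial sums of `∑ hₙ(x)` are
bounded above. -/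
def Omega (h : ℕ → ℝ → ℝ) : Set ℝ :=
  {x ∈ Set.Icc (0:ℝ) 1 | ∃ γ : ℝ, ∀ m : ℕ, ∑ n ∈ Finset.range (m+1), h n x ≤ γ}

/-- A subset `X ⊆ [0,1]` is *almost full* if `Ω(𝔥) ⊆ X` for some regular sequence `𝔥`. -/
def AlmostFull (X : Set ℝ) : Prop :=
  ∃ h : ℕ → ℝ → ℝ, RegularSeq h ∧ Omega h ⊆ X

/-!
Every `h_{n,k}` occurs in `g_{n+k}` with the fixed weight `2^{-2n-1}`, so the partial sums of
`∑_k h_{n,k}(x)` are bounded by `2^{2n+1}` times those of `∑_k g_k(x)`. The weight is also small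
enough for regularity: `∫ g_k < ∑_{n ≤ k} 2^{-2n-1} 2^{-(k-n)} = 2^{-k-1} ∑_{n ≤ k} 2^{-n} ≤ 2^{-k}`.
-/

def diagCombination (h : ℕ → ℕ → ℝ → ℝ) (k : ℕ) (x : ℝ) : ℝ :=
  ∑ n ∈ Finset.range (k+1), (1/2 : ℝ)^(2*n+1) * h n (k-n) x

lemma RegularSeq.intervalIntegrable {h : ℕ → ℝ → ℝ} (hh : RegularSeq h) (n : ℕ) :
    IntervalIntegrable (h n) volume 0 1 :=
  (hh n).1.intervalIntegrable_of_Icc zero_le_one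

lemma sum_half_pow_two_mul_add_one_mul_half_pow_sub_le (k : ℕ) :
    ∑ n ∈ Finset.range (k+1), (1/2 : ℝ)^(2*n+1) * (1/2 : ℝ)^(k-n) ≤ (1/2 : ℝ)^k := by
  have hterm : ∀ n ∈ Finset.range (k+1),
      (1/2 : ℝ)^(2*n+1) * (1/2 : ℝ)^(k-n) = (1/2 : ℝ)^(k+1) * (1/2 : ℝ)^n := by
    intro n hn
    rw [← pow_add, ← pow_add]
    congr 1
    have := Finset.mem_range.mp hn
    omega
  calc ∑ n ∈ Finset.range (k+1), (1/2 : ℝ)^(2*n+1) * (1/2 : ℝ)^(k-n)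
      = (1/2 : ℝ)^(k+1) * ∑ n ∈ Finset.range (k+1), (1/2 : ℝ)^n := by
        rw [Finset.sum_congr rfl hterm, Finset.mul_sum]
    _ ≤ (1/2 : ℝ)^(k+1) * 2 := by gcongr; exact sum_geometric_two_le _
    _ = (1/2 : ℝ)^k := by ring

section diagCombination

variable {hseq : ℕ → ℕ → ℝ → ℝ}

lemma diagCombination_nonneg (hreg : ∀ n, RegularSeq (hseq n)) (k : ℕ) {x : ℝ}
    (hx : x ∈ Icc (0:ℝ) 1) : 0 ≤ diagCombination hseq k x :=
  Finset.sum_nonneg fun n _ => mul_nonneg (by positivity) ((hreg n (k-n)).2.1 x hx)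

lemma integral_diagCombination_lt (hreg : ∀ n, RegularSeq (hseq n)) (k : ℕ) :
    ∫ x in (0:ℝ)..1, diagCombination hseq k x < (1/2 : ℝ)^k := by
  unfold diagCombination
  rw [intervalIntegral.integral_finsetSum
    fun n _ => ((hreg n).intervalIntegrable (k-n)).const_mul _]
  refine lt_of_lt_of_le ?_ (sum_half_pow_two_mul_add_one_mul_half_pow_sub_le k)
  refine Finset.sum_lt_sum_of_nonempty Finset.nonempty_range_add_one fun n _ => ?_
  rw [intervalIntegral.integral_const_mul]
  exact mul_lt_mul_of_pos_left (hreg n (k-n)).2.2 (by positivity)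

lemma regularSeq_diagCombination (hreg : ∀ n, RegularSeq (hseq n)) :
    RegularSeq (diagCombination hseq) := fun k =>
  ⟨continuousOn_finsetSum _ fun n _ => continuousOn_const.mul (hreg n (k-n)).1,
    fun _ hx => diagCombination_nonneg hreg k hx, integral_diagCombination_lt hreg k⟩

lemma half_pow_mul_le_diagCombination (hreg : ∀ n, RegularSeq (hseq n)) (n k : ℕ) {x : ℝ}
    (hx : x ∈ Icc (0:ℝ) 1) :
    (1/2 : ℝ)^(2*n+1) * hseq n k x ≤ diagCombination hseq (n+k) x := by
  have hsingle := Finset.single_le_sum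
    (f := fun j => (1/2 : ℝ)^(2*j+1) * hseq j ((n+k)-j) x)
    (fun j _ => mul_nonneg (by positivity) ((hreg j _).2.1 x hx))
    (Finset.mem_range.mpr (by omega : n < n+k+1))
  simpa only [diagCombination, Nat.add_sub_cancel_left] using hsingle

end diagCombination

lemma Omega_subset_of_mul_le_shift {h g : ℕ → ℝ → ℝ} {c : ℝ} (hc : 0 < c) (n : ℕ)
    (hg : ∀ k, ∀ x ∈ Icc (0:ℝ) 1, 0 ≤ g k x)
    (hle : ∀ k, ∀ x ∈ Icc (0:ℝ) 1, c * h k x ≤ g (n+k) x) :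
    Omega g ⊆ Omega h := by
  rintro x ⟨hx, γ, hγ⟩
  refine ⟨hx, γ / c, fun m => (le_div_iff₀' hc).mpr ?_⟩
  have hshift : ∑ k ∈ Finset.range (m+1), g (n+k) x ≤ ∑ j ∈ Finset.range (n+m+1), g j x := by
    rw [add_assoc, Finset.sum_range_add (g · x) n (m+1)]
    exact le_add_of_nonneg_left (Finset.sum_nonneg fun j _ => hg j x hx)
  calc c * ∑ k ∈ Finset.range (m+1), h k x
      = ∑ k ∈ Finset.range (m+1), c * h k x := Finset.mul_sum _ _ _
    _ ≤ ∑ k ∈ Finset.range (m+1), g (n+k) x := Finset.sum_le_sum fun k _ => hle k x hx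
    _ ≤ γ := hshift.trans (hγ (n+m))

/-- If each `(h_{n,k})_k` is regular and `g_k = ∑_{n=0}^k 2^{-2n-1} h_{n,k-n}`, then `(g_k)`
is regular and `Ω((g_k)) ⊆ ⋂ₙ Ω((h_{n,k})_k)`. -/
theorem stmt5 (hseq : ℕ → ℕ → ℝ → ℝ) (hreg : ∀ n, RegularSeq (hseq n))
    (g : ℕ → ℝ → ℝ)
    (hg : ∀ k x, g k x = ∑ n ∈ Finset.range (k+1), (1/2 : ℝ)^(2*n+1) * hseq n (k-n) x) :
    RegularSeq g ∧ Omega g ⊆ ⋂ n, Omega (hseq n) := by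
  obtain rfl : g = diagCombination hseq := funext fun k => funext (hg k)
  refine ⟨regularSeq_diagCombination hreg, subset_iInter fun n => ?_⟩
  exact Omega_subset_of_mul_le_shift (by positivity) n
    (fun k _ hx => diagCombination_nonneg hreg k hx)
    (fun k _ hx => half_pow_mul_le_diagCombination hreg n k hx)
end
end

section
/- A subset X ⊆ [0,1] is almost full if and only if X is summably measurable with measure 1. -/
open MeasureTheory Filter Set

noncomputable section

/-- `f : D → ℝ` is *summable with integral `I`* if there are an almost full set `Y ⊆ D`
and continuous functions `Fₙ` on `[0,1]` with `∫₀¹ |Fₙ₊₁ - Fₙ| < 2⁻ⁿ`, `Fₙ(x) → f(x)`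
on `Y`, and `∫₀¹ Fₙ → I`. -/
def SummableWithIntegral (D : Set ℝ) (f : ℝ → ℝ) (I : ℝ) : Prop :=
  ∃ (Y : Set ℝ) (F : ℕ → ℝ → ℝ),
    AlmostFull Y ∧ Y ⊆ D ∧
    (∀ n : ℕ, ContinuousOn (F n) (Set.Icc 0 1)) ∧
    (∀ n : ℕ, (∫ x in (0:ℝ)..1, |F (n+1) x - F n x|) < (1/2 : ℝ) ^ n) ∧
    (∀ x ∈ Y, Tendsto (fun n => F n x) atTop (nhds (f x))) ∧
    Tendsto (fun n => ∫ x in (0:ℝ)..1, F n x) atTop (nhds I)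

/-- `X ⊆ [0,1]` is *summably measurable with measure `μ`* if its indicator function is
summable with integral `μ`. -/
def SummablyMeasurable (X : Set ℝ) (μ : ℝ) : Prop :=
  SummableWithIntegral (Set.Icc 0 1) (X.indicator fun _ => (1:ℝ)) μ

/-! The convergence set `Ω(𝔥)` of a regular sequence has full measure in `[0,1]`, since
`∑ ∫ hₙ < ∞`. So if `1_X` is summable with integral `1`, the approximants `Fₙ` converge to `1_X`
almost everywhere, and Fatou's lemma turns `∫ |Fₙ₊₁ - Fₙ| < 2⁻ⁿ` into `∫ |Fₙ - 1_X| ≤ 2 · 2⁻ⁿ`;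
in particular `∫ 1_X = 1`. Hence `(1 - Fₙ)⁺ ≤ |Fₙ - 1_X| + (1 - 1_X)` has integral at most
`2 · 2⁻ⁿ`, and adding these functions, with shifted indices, to the regular sequence witnessing
that `Y` is almost full gives a regular sequence whose convergence set lies in `Y` and avoids
every point where `Fₙ → 0`, hence lies in `X`. Conversely, the constant approximants `1`
witness that `1_X` is summable on `Ω(𝔥) ⊆ X`. -/

open Topology

section

variable {α : Type*} [MeasurableSpace α] {μ : Measure α}

theorem ae_summable_of_summable_integral {f : ℕ → α → ℝ} (hint : ∀ n, Integrable (f n) μ)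
    (hnn : ∀ n, 0 ≤ᵐ[μ] f n) (hsum : Summable fun n => ∫ x, f n x ∂μ) :
    ∀ᵐ x ∂μ, Summable fun n => f n x := by
  have hmeas : ∀ n, AEMeasurable (fun x => ENNReal.ofReal (f n x)) μ :=
    fun n => (hint n).aemeasurable.ennreal_ofReal
  have hfin : ∫⁻ x, ∑' n, ENNReal.ofReal (f n x) ∂μ ≠ ⊤ := by
    simp_rw [lintegral_tsum hmeas,
      ← ofReal_integral_eq_lintegral_ofReal (hint _) (hnn _),
      ← ENNReal.ofReal_tsum_of_nonneg (fun n => integral_nonneg_of_ae (hnn n)) hsum]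
    exact ENNReal.ofReal_ne_top
  filter_upwards [ae_lt_top' (AEMeasurable.tsum hmeas) hfin, ae_all_iff.2 hnn]
    with x hx hx0
  simpa only [ENNReal.toReal_ofReal (hx0 _)] using ENNReal.summable_toReal hx.ne

theorem sum_Ico_geometric_half_le (n m : ℕ) :
    ∑ k ∈ Finset.Ico n m, (1/2 : ℝ) ^ k ≤ 2 * (1/2) ^ n := by
  rw [Finset.sum_Ico_eq_sum_range]
  simp_rw [pow_add, ← Finset.mul_sum]
  linarith [mul_le_mul_of_nonneg_left (sum_geometric_two_le (m - n))
    (by positivity : (0:ℝ) ≤ (1/2) ^ n)]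

def FastL1Cauchy (μ : Measure α) (F : ℕ → α → ℝ) : Prop :=
  ∀ n, ∫⁻ x, ‖F (n+1) x - F n x‖ₑ ∂μ ≤ ENNReal.ofReal ((1/2) ^ n)

variable {F : ℕ → α → ℝ}

theorem FastL1Cauchy.lintegral_enorm_sub_le (hd : FastL1Cauchy μ F)
    (hF : ∀ n, AEMeasurable (F n) μ) {n m : ℕ} (hnm : n ≤ m) :
    ∫⁻ x, ‖F m x - F n x‖ₑ ∂μ ≤ ENNReal.ofReal (2 * (1/2) ^ n) := by
  have htel : ∀ x, F m x - F n x = ∑ k ∈ Finset.Ico n m, (F (k+1) x - F k x) := fun x =>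
    (Finset.sum_Ico_sub (fun k => F k x) hnm).symm
  calc ∫⁻ x, ‖F m x - F n x‖ₑ ∂μ
      ≤ ∫⁻ x, ∑ k ∈ Finset.Ico n m, ‖F (k+1) x - F k x‖ₑ ∂μ :=
        lintegral_mono fun x => (htel x).symm ▸ enorm_sum_le _ _
    _ = ∑ k ∈ Finset.Ico n m, ∫⁻ x, ‖F (k+1) x - F k x‖ₑ ∂μ :=
        lintegral_finsetSum' _ fun k _ => ((hF (k+1)).sub (hF k)).enorm
    _ ≤ ∑ k ∈ Finset.Ico n m, ENNReal.ofReal ((1/2) ^ k) := Finset.sum_le_sum fun k _ => hd k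
    _ = ENNReal.ofReal (∑ k ∈ Finset.Ico n m, (1/2) ^ k) :=
        (ENNReal.ofReal_sum_of_nonneg fun k _ => by positivity).symm
    _ ≤ ENNReal.ofReal (2 * (1/2) ^ n) := ENNReal.ofReal_le_ofReal (sum_Ico_geometric_half_le n m)

variable {G : α → ℝ}

theorem FastL1Cauchy.lintegral_enorm_sub_limit_le (hd : FastL1Cauchy μ F)
    (hF : ∀ n, AEMeasurable (F n) μ)
    (hlim : ∀ᵐ x ∂μ, Tendsto (F · x) atTop (𝓝 (G x))) (n : ℕ) :
    ∫⁻ x, ‖G x - F n x‖ₑ ∂μ ≤ ENNReal.ofReal (2 * (1/2) ^ n) := by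
  have hliminf : ∀ᵐ x ∂μ, ‖G x - F n x‖ₑ = liminf (fun m => ‖F m x - F n x‖ₑ) atTop := by
    filter_upwards [hlim] with x hx
    exact ((continuous_enorm.tendsto _).comp (hx.sub_const _)).liminf_eq.symm
  calc ∫⁻ x, ‖G x - F n x‖ₑ ∂μ
      = ∫⁻ x, liminf (fun m => ‖F m x - F n x‖ₑ) atTop ∂μ := lintegral_congr_ae hliminf
    _ ≤ liminf (fun m => ∫⁻ x, ‖F m x - F n x‖ₑ ∂μ) atTop :=
        lintegral_liminf_le' fun m => ((hF m).sub (hF n)).enorm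
    _ ≤ ENNReal.ofReal (2 * (1/2) ^ n) := liminf_le_of_frequently_le
        (eventually_atTop.2 ⟨n, fun m => hd.lintegral_enorm_sub_le hF⟩).frequently

theorem FastL1Cauchy.integrable_limit (hd : FastL1Cauchy μ F) (hF : ∀ n, Integrable (F n) μ)
    (hlim : ∀ᵐ x ∂μ, Tendsto (F · x) atTop (𝓝 (G x))) : Integrable G μ := by
  have hG := aestronglyMeasurable_of_tendsto_ae atTop (fun n => (hF n).1) hlim
  have hGF : Integrable (fun x => G x - F 0 x) μ := ⟨hG.sub (hF 0).1,
    (hd.lintegral_enorm_sub_limit_le (fun n => (hF n).aemeasurable) hlim 0).trans_lt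
      ENNReal.ofReal_lt_top⟩
  exact (hGF.add (hF 0)).congr (ae_of_all _ fun x => sub_add_cancel (G x) (F 0 x))

theorem FastL1Cauchy.tendsto_integral (hd : FastL1Cauchy μ F) (hF : ∀ n, Integrable (F n) μ)
    (hlim : ∀ᵐ x ∂μ, Tendsto (F · x) atTop (𝓝 (G x))) :
    Tendsto (fun n => ∫ x, F n x ∂μ) atTop (𝓝 (∫ x, G x ∂μ)) := by
  refine tendsto_integral_of_L1 G (hd.integrable_limit hF hlim).1
    (Eventually.of_forall hF) ?_
  have hbound : Tendsto (fun n => ENNReal.ofReal (2 * (1/2:ℝ) ^ n)) atTop (𝓝 0) := by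
    simpa using ENNReal.tendsto_ofReal ((tendsto_pow_atTop_nhds_zero_of_lt_one
      (by norm_num : (0:ℝ) ≤ 1/2) (by norm_num)).const_mul 2)
  refine tendsto_of_tendsto_of_tendsto_of_le_of_le tendsto_const_nhds hbound (fun _ => bot_le)
    fun n => ?_
  simpa only [enorm_sub_rev] using
    hd.lintegral_enorm_sub_limit_le (fun n => (hF n).aemeasurable) hlim n

theorem FastL1Cauchy.integral_abs_sub_limit_le (hd : FastL1Cauchy μ F)
    (hF : ∀ n, Integrable (F n) μ)
    (hlim : ∀ᵐ x ∂μ, Tendsto (F · x) atTop (𝓝 (G x))) (n : ℕ) :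
    ∫ x, |F n x - G x| ∂μ ≤ 2 * (1/2) ^ n := by
  have hG := hd.integrable_limit hF hlim
  calc ∫ x, |F n x - G x| ∂μ = (∫⁻ x, ‖F n x - G x‖ₑ ∂μ).toReal :=
        integral_norm_eq_lintegral_enorm ((hF n).1.sub hG.1)
    _ ≤ 2 * (1/2) ^ n := ENNReal.toReal_le_of_le_ofReal (by positivity) <| by
        simpa only [enorm_sub_rev] using
          hd.lintegral_enorm_sub_limit_le (fun n => (hF n).aemeasurable) hlim n

theorem integral_max_one_sub_le [IsFiniteMeasure μ] {f g : α → ℝ} (hf : Integrable f μ)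
    (hg : Integrable g μ) (hg1 : ∀ x, g x ≤ 1) (hgμ : ∫ x, g x ∂μ = μ.real univ) :
    ∫ x, max (1 - f x) 0 ∂μ ≤ ∫ x, |f x - g x| ∂μ := by
  have h1g : Integrable (fun x => 1 - g x) μ := (integrable_const 1).sub hg
  have hfg : Integrable (fun x => |f x - g x|) μ := (hf.sub hg).abs
  have hzero : ∫ x, (1 - g x) ∂μ = 0 := by
    rw [integral_sub (integrable_const 1) hg, integral_const, hgμ, smul_eq_mul, mul_one, sub_self]
  calc ∫ x, max (1 - f x) 0 ∂μ ≤ ∫ x, (|f x - g x| + (1 - g x)) ∂μ := by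
        refine integral_mono ((integrable_const 1).sub hf).pos_part (hfg.add h1g)
          fun x => max_le ?_ ?_
        · linarith [neg_abs_le (f x - g x)]
        · linarith [abs_nonneg (f x - g x), hg1 x]
    _ = ∫ x, |f x - g x| ∂μ := by rw [integral_add hfg h1g, hzero, add_zero]

end

theorem integral_Icc_eq_intervalIntegral (f : ℝ → ℝ) :
    ∫ x in Icc (0:ℝ) 1, f x = ∫ x in (0:ℝ)..1, f x := by
  rw [intervalIntegral.integral_of_le zero_le_one, integral_Icc_eq_integral_Ioc]

theorem lintegral_Icc_enorm_eq {f : ℝ → ℝ} (hf : IntegrableOn f (Icc 0 1)) :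
    ∫⁻ x in Icc (0:ℝ) 1, ‖f x‖ₑ = ENNReal.ofReal (∫ x in (0:ℝ)..1, |f x|) := by
  rw [← integral_Icc_eq_intervalIntegral, ← ofReal_integral_norm_eq_lintegral_enorm hf]
  rfl

theorem mem_Omega_iff_summable {h : ℕ → ℝ → ℝ} {x : ℝ} (hx : x ∈ Icc (0:ℝ) 1)
    (hnn : ∀ n, 0 ≤ h n x) : x ∈ Omega h ↔ Summable fun n => h n x := by
  refine ⟨fun ⟨_, γ, hγ⟩ => summable_of_sum_range_le (c := γ) hnn fun m => ?_,
    fun hs => ⟨hx, ∑' n, h n x, fun m => hs.sum_le_tsum _ fun n _ => hnn n⟩⟩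
  exact (Finset.sum_le_sum_of_subset_of_nonneg (Finset.range_subset_range.2 m.le_succ)
    fun n _ _ => hnn n).trans (hγ m)

theorem RegularSeq.ae_mem_Omega {h : ℕ → ℝ → ℝ} (hh : RegularSeq h) :
    ∀ᵐ x ∂volume.restrict (Icc (0:ℝ) 1), x ∈ Omega h := by
  have hint : ∀ n, IntegrableOn (h n) (Icc 0 1) := fun n => (hh n).1.integrableOn_Icc
  have hnn : ∀ n, 0 ≤ᵐ[volume.restrict (Icc (0:ℝ) 1)] h n := fun n =>
    (ae_restrict_mem measurableSet_Icc).mono (hh n).2.1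
  have hsum : Summable fun n => ∫ x in Icc (0:ℝ) 1, h n x := by
    refine Summable.of_nonneg_of_le (fun n => integral_nonneg_of_ae (hnn n)) (fun n => ?_)
      summable_geometric_two
    rw [integral_Icc_eq_intervalIntegral]
    exact (hh n).2.2.le
  filter_upwards [ae_summable_of_summable_integral hint hnn hsum, ae_restrict_mem measurableSet_Icc]
    with x hs hx
  exact (mem_Omega_iff_summable hx fun n => (hh n).2.1 x hx).2 hs

theorem RegularSeq.shift_add {h φ : ℕ → ℝ → ℝ} (hh : RegularSeq h)
    (hφc : ∀ n, ContinuousOn (φ n) (Icc 0 1)) (hφnn : ∀ n, ∀ x ∈ Icc (0:ℝ) 1, 0 ≤ φ n x)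
    (hφ : ∀ n, ∫ x in (0:ℝ)..1, φ n x ≤ 2 * (1/2) ^ n) :
    RegularSeq fun n x => h (n+1) x + φ (n+2) x := by
  intro n
  obtain ⟨hc, hnn, hint⟩ := hh (n+1)
  refine ⟨hc.add (hφc (n+2)), fun x hx => add_nonneg (hnn x hx) (hφnn _ x hx), ?_⟩
  rw [intervalIntegral.integral_add (hc.intervalIntegrable_of_Icc zero_le_one)
    ((hφc (n+2)).intervalIntegrable_of_Icc zero_le_one)]
  calc _ < (1/2:ℝ) ^ (n+1) + 2 * (1/2) ^ (n+2) := add_lt_add_of_lt_of_le hint (hφ (n+2))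
    _ = (1/2) ^ n := by ring

theorem Omega_shift_add_subset {h φ : ℕ → ℝ → ℝ} (hh : ∀ n, ∀ x ∈ Icc (0:ℝ) 1, 0 ≤ h n x)
    (hφ : ∀ n, ∀ x ∈ Icc (0:ℝ) 1, 0 ≤ φ n x) :
    Omega (fun n x => h (n+1) x + φ (n+2) x) ⊆
      {x ∈ Omega h | Tendsto (φ · x) atTop (𝓝 0)} := by
  intro x hx
  have hx01 := hx.1
  have hs := (mem_Omega_iff_summable (h := fun n x => h (n+1) x + φ (n+2) x) hx01 fun n =>
    add_nonneg (hh (n+1) x hx01) (hφ (n+2) x hx01)).1 hx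
  have hsh : Summable fun n => h (n+1) x := Summable.of_nonneg_of_le (fun n => hh _ x hx01)
    (fun n => le_add_of_nonneg_right (hφ _ x hx01)) hs
  have hsφ : Summable fun n => φ (n+2) x := Summable.of_nonneg_of_le (fun n => hφ _ x hx01)
    (fun n => le_add_of_nonneg_left (hh _ x hx01)) hs
  exact ⟨(mem_Omega_iff_summable hx01 (hh · x hx01)).2 ((summable_nat_add_iff 1).1 hsh),
    (tendsto_add_atTop_iff_nat 2).1 hsφ.tendsto_atTop_zero⟩

theorem AlmostFull.summablyMeasurable_one {X : Set ℝ} (hX : AlmostFull X) :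
    SummablyMeasurable X 1 := by
  obtain ⟨h, hh, hΩX⟩ := hX
  refine ⟨Omega h, fun _ _ => 1, ⟨h, hh, subset_rfl⟩, fun x hx => hx.1,
    fun _ => continuousOn_const, fun n => by simp, fun x hx => ?_, by simp⟩
  simp [indicator_of_mem (hΩX hx)]

theorem SummablyMeasurable.almostFull {X : Set ℝ} (hX : SummablyMeasurable X 1) :
    AlmostFull X := by
  obtain ⟨Y, F, ⟨h, hh, hΩY⟩, -, hFc, hFd, hFY, hFI⟩ := hX
  set G := X.indicator fun _ => (1:ℝ)
  set μ := volume.restrict (Icc (0:ℝ) 1)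
  have hF : ∀ n, Integrable (F n) μ := fun n => (hFc n).integrableOn_Icc
  have hd : FastL1Cauchy μ F := fun n => by
    rw [lintegral_Icc_enorm_eq (f := fun x => F (n+1) x - F n x) ((hF (n+1)).sub (hF n))]
    exact ENNReal.ofReal_le_ofReal (hFd n).le
  have hlim : ∀ᵐ x ∂μ, Tendsto (F · x) atTop (𝓝 (G x)) :=
    hh.ae_mem_Omega.mono fun x hx => hFY x (hΩY hx)
  have hG : Integrable G μ := hd.integrable_limit hF hlim
  have hGμ : ∫ x, G x ∂μ = μ.real univ := by
    rw [measureReal_restrict_apply_univ, Real.volume_real_Icc_of_le zero_le_one, sub_zero]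
    refine tendsto_nhds_unique (hd.tendsto_integral hF hlim) ?_
    simpa only [μ, integral_Icc_eq_intervalIntegral] using hFI
  set φ : ℕ → ℝ → ℝ := fun n x => max (1 - F n x) 0
  have hφ : ∀ n, ∫ x in (0:ℝ)..1, φ n x ≤ 2 * (1/2) ^ n := fun n => by
    rw [← integral_Icc_eq_intervalIntegral]
    refine (integral_max_one_sub_le (hF n) hG (fun x => ?_) hGμ).trans ?_
    · exact indicator_le_self' (fun _ _ => zero_le_one) x
    · exact hd.integral_abs_sub_limit_le hF hlim n
  have hφc : ∀ n, ContinuousOn (φ n) (Icc 0 1) := fun n =>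
    (continuousOn_const.sub (hFc n)).sup continuousOn_const
  have hφnn : ∀ n, ∀ x ∈ Icc (0:ℝ) 1, 0 ≤ φ n x := fun n x _ => le_max_right _ _
  refine ⟨_, hh.shift_add hφc hφnn hφ, fun x hx => ?_⟩
  obtain ⟨hxΩ, hφx⟩ := Omega_shift_add_subset (fun n => (hh n).2.1) hφnn hx
  by_contra hxX
  have hφx1 : Tendsto (φ · x) atTop (𝓝 1) := by
    simpa [G, hxX] using ((hFY x (hΩY hxΩ)).const_sub 1).max (tendsto_const_nhds (x := (0:ℝ)))
  exact one_ne_zero (tendsto_nhds_unique hφx1 hφx)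

theorem stmt14_general (X : Set ℝ) :
    AlmostFull X ↔ SummablyMeasurable X 1 :=
  ⟨AlmostFull.summablyMeasurable_one, SummablyMeasurable.almostFull⟩

/-- A subset of `[0,1]` is almost full iff it is summably measurable with measure `1`. -/
theorem stmt14 (X : Set ℝ) (hX : X ⊆ Set.Icc 0 1) :
    AlmostFull X ↔ SummablyMeasurable X 1 :=
  stmt14_general X
end
end
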